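/- Let n, h, k be integers with 1 ≤ k ≤ h and n ≡ h (mod 2). Then the total number of k-down steps, summed over all generalized Dyck paths from (0,0) to (n,h), equals C(n, (n+h)/2 + 1) − C(n, (n+h)/2 + k + 1). -/

import Mathlib

open Finset

attribute [local instance] Classical.propDecidable

/-- The height of the lattice path `p` (where `true` is a northeast step `(1,1)` and
`false` is a southeast step `(1,-1)`) after its first `i` steps. -/
def pathHeight {n : ℕ} (p : Fin n → Bool) (i : ℕ) : ℤ :=
  ∑ j ∈ Finset.univ.filter (fun j : Fin n => (j : ℕ) < i), (if p j then (1 : ℤ) else -1)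

/-- `p` is a generalized Dyck path from `(0,0)` to `(n,h)`: it ends at height `h`
and never goes below the x-axis. -/
def IsGDPath {n : ℕ} (h : ℤ) (p : Fin n → Bool) : Prop :=
  pathHeight p n = h ∧ ∀ i ≤ n, 0 ≤ pathHeight p i

/-- The set of generalized Dyck paths from `(0,0)` to `(n,h)`. -/
noncomputable def gdPaths (n : ℕ) (h : ℤ) : Finset (Fin n → Bool) :=
  Finset.univ.filter (IsGDPath h)

/-- The number of `k`-down steps of `p`, i.e. southeast steps from height `k` to `k-1`. -/
noncomputable def downSteps {n : ℕ} (k : ℤ) (p : Fin n → Bool) : ℕ :=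
  (Finset.univ.filter (fun i : Fin n => p i = false ∧ pathHeight p (i : ℕ) = k)).card

/-- Binomial coefficient on integers, `0` unless `0 ≤ b ≤ a`. -/
def binom (a b : ℤ) : ℤ :=
  if 0 ≤ b ∧ b ≤ a then (a.toNat.choose b.toNat : ℤ) else 0

/-!
Removing the last step of a path to height `h ≥ 0` leaves a path to height `h - 1` or `h + 1`,
and that last step is a new `k`-down step exactly when it goes down from `h + 1 = k`. So the
number of paths and the total number of `k`-down steps satisfy Pascal-type recurrences in `n`,
and so do `C(n, u) - C(n, u + 1)` and `C(n, u + max 1 (k - h)) - C(n, u + k + 1)`, where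
`2u = n + h`. Both formulas stay valid at `h = -1`, where they vanish by the symmetry of the
binomial coefficients; this makes `h = 0` an ordinary case of the induction.
-/

lemma binom_of_neg (a : ℤ) {b : ℤ} (hb : b < 0) : binom a b = 0 :=
  if_neg fun h => by omega

lemma binom_of_lt {a b : ℤ} (hab : a < b) : binom a b = 0 :=
  if_neg fun h => by omega

lemma binom_natCast (n j : ℕ) : binom n j = n.choose j := by
  rcases le_or_gt j n with hj | hj
  · rw [binom, if_pos ⟨by positivity, by exact_mod_cast hj⟩, Int.toNat_natCast,
      Int.toNat_natCast]
  · rw [binom_of_lt (by exact_mod_cast hj), Nat.choose_eq_zero_of_lt hj, Nat.cast_zero]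

lemma binom_succ (n : ℕ) (j : ℤ) : binom (n + 1) j = binom n (j - 1) + binom n j := by
  rcases lt_or_ge j 0 with hj | hj
  · rw [binom_of_neg _ hj, binom_of_neg _ hj, binom_of_neg _ (by omega), add_zero]
  lift j to ℕ using hj
  rw [show (n : ℤ) + 1 = (n + 1 : ℕ) by push_cast; rfl, binom_natCast, binom_natCast]
  cases j with
  | zero => rw [binom_of_neg _ (by omega)]; simp
  | succ j =>
    rw [show ((j + 1 : ℕ) : ℤ) - 1 = j by push_cast; ring, binom_natCast,
      Nat.choose_succ_succ', Nat.cast_add]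

lemma binom_symm (n : ℕ) (j : ℤ) : binom n (n - j) = binom n j := by
  rcases lt_or_ge j 0 with hj | hj
  · rw [binom_of_neg _ hj, binom_of_lt (by omega)]
  rcases lt_or_ge (n : ℤ) j with hjn | hjn
  · rw [binom_of_lt hjn, binom_of_neg _ (by omega)]
  lift j to ℕ using hj
  have hjn : j ≤ n := by exact_mod_cast hjn
  rw [← Nat.cast_sub hjn, binom_natCast, binom_natCast, Nat.choose_symm hjn]

lemma pathHeight_snoc_of_le {n : ℕ} (q : Fin n → Bool) (b : Bool) {i : ℕ} (hi : i ≤ n) :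
    pathHeight (Fin.snoc q b) i = pathHeight q i := by
  simp only [pathHeight, sum_filter, Fin.sum_univ_castSucc, Fin.snoc_castSucc,
    Fin.val_castSucc, Fin.val_last]
  rw [if_neg (by omega), add_zero]

lemma pathHeight_snoc_succ {n : ℕ} (q : Fin n → Bool) (b : Bool) :
    pathHeight (Fin.snoc q b) (n + 1) = pathHeight q n + if b then 1 else -1 := by
  simp [pathHeight, sum_filter, Fin.sum_univ_castSucc, Fin.is_lt]

lemma pathHeight_zero {n : ℕ} (p : Fin n → Bool) : pathHeight p 0 = 0 := by
  simp [pathHeight]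

lemma gdPaths_zero (h : ℤ) : gdPaths 0 h = if h = 0 then univ else ∅ := by
  ext p
  split_ifs with hh <;> simp [gdPaths, IsGDPath, pathHeight_zero, eq_comm, hh]

lemma gdPaths_eq_empty_of_neg (n : ℕ) {h : ℤ} (hh : h < 0) : gdPaths n h = ∅ := by
  ext p
  simp only [gdPaths, IsGDPath, mem_filter, mem_univ, true_and, notMem_empty, iff_false, not_and]
  intro hend hnonneg
  linarith [hnonneg n le_rfl]

lemma snoc_mem_gdPaths_iff {n : ℕ} {h : ℤ} (hh : 0 ≤ h) (q : Fin n → Bool) (b : Bool) :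
    Fin.snoc q b ∈ gdPaths (n + 1) h ↔ q ∈ gdPaths n (h - if b then 1 else -1) := by
  simp only [gdPaths, IsGDPath, mem_filter, mem_univ, true_and, pathHeight_snoc_succ]
  constructor
  · rintro ⟨hend, hnonneg⟩
    refine ⟨by omega, fun i hi => ?_⟩
    simpa only [pathHeight_snoc_of_le q b hi] using hnonneg i (by omega)
  · rintro ⟨hend, hnonneg⟩
    refine ⟨by omega, fun i hi => ?_⟩
    rcases Nat.lt_or_ge i (n + 1) with hi' | hi'
    · rw [pathHeight_snoc_of_le q b (by omega)]
      exact hnonneg i (by omega)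
    · obtain rfl : i = n + 1 := by omega
      rw [pathHeight_snoc_succ]
      omega

lemma sum_gdPaths_succ {M : Type*} [AddCommMonoid M] {n : ℕ} {h : ℤ} (hh : 0 ≤ h)
    (f : (Fin (n + 1) → Bool) → M) :
    ∑ p ∈ gdPaths (n + 1) h, f p =
      ∑ q ∈ gdPaths n (h - 1), f (Fin.snoc q true) +
        ∑ q ∈ gdPaths n (h + 1), f (Fin.snoc q false) := by
  have snocEquiv_eq : ∀ b (q : Fin n → Bool),
      Fin.snocEquiv (fun _ => Bool) (b, q) = Fin.snoc q b := fun _ _ => rfl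
  rw [← sum_ite_mem_eq, ← (Fin.snocEquiv fun _ => Bool).sum_comp, Fintype.sum_prod_type,
    Fintype.sum_bool]
  simp only [snocEquiv_eq, snoc_mem_gdPaths_iff hh, if_true, Bool.false_eq_true, if_false,
    sub_neg_eq_add, sum_ite_mem_eq]

lemma card_gdPaths_succ {n : ℕ} {h : ℤ} (hh : 0 ≤ h) :
    #(gdPaths (n + 1) h) = #(gdPaths n (h - 1)) + #(gdPaths n (h + 1)) := by
  simpa only [card_eq_sum_ones] using sum_gdPaths_succ hh (fun _ => 1)

lemma downSteps_snoc {n : ℕ} (k : ℤ) (q : Fin n → Bool) (b : Bool) :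
    downSteps k (Fin.snoc q b) =
      downSteps k q + if b = false ∧ pathHeight q n = k then 1 else 0 := by
  simp only [downSteps, card_filter, Fin.sum_univ_castSucc, Fin.snoc_castSucc, Fin.val_castSucc,
    Fin.snoc_last, Fin.val_last, pathHeight_snoc_of_le q b le_rfl]
  congr 1
  refine sum_congr rfl fun i _ => ?_
  rw [pathHeight_snoc_of_le q b i.is_lt.le]

lemma sum_downSteps_gdPaths_succ {n : ℕ} {h : ℤ} (k : ℤ) (hh : 0 ≤ h) :
    ∑ p ∈ gdPaths (n + 1) h, downSteps k p =
      ∑ q ∈ gdPaths n (h - 1), downSteps k q + ∑ q ∈ gdPaths n (h + 1), downSteps k q +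
        if h + 1 = k then #(gdPaths n (h + 1)) else 0 := by
  have last_step : ∑ q ∈ gdPaths n (h + 1), (if pathHeight q n = k then 1 else 0) =
      if h + 1 = k then #(gdPaths n (h + 1)) else 0 := by
    rw [sum_congr rfl fun q hq => by rw [(mem_filter.mp hq).2.1], sum_ite_irrel]
    simp
  simp only [sum_gdPaths_succ hh, downSteps_snoc, Bool.true_eq_false, false_and, if_false,
    add_zero, true_and, sum_add_distrib, last_step, add_assoc]

theorem card_gdPaths (n : ℕ) {h u : ℤ} (hh : -1 ≤ h) (hu : 2 * u = n + h) :
    (#(gdPaths n h) : ℤ) = binom n u - binom n (u + 1) := by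
  induction n generalizing h u with
  | zero =>
    rw [gdPaths_zero]
    split_ifs with h0
    · obtain rfl : u = 0 := by omega
      simp [binom]
    · rw [card_empty, binom_of_lt (by omega), binom_of_lt (by omega), Nat.cast_zero, sub_self]
  | succ n ih =>
    rcases hh.eq_or_lt with rfl | hh
    · rw [gdPaths_eq_empty_of_neg _ (by norm_num), card_empty, Nat.cast_zero, ← binom_symm,
        show ((n + 1 : ℕ) : ℤ) - u = u + 1 by omega, sub_self]
    · rw [card_gdPaths_succ (by omega), Nat.cast_add, ih (u := u - 1) (by omega) (by omega),
        ih (u := u) (by omega) (by omega), Nat.cast_succ, binom_succ, binom_succ]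
      ring_nf

theorem sum_downSteps_gdPaths (n : ℕ) {h u k : ℤ} (hh : -1 ≤ h) (hk : 0 ≤ k)
    (hu : 2 * u = n + h) :
    ((∑ p ∈ gdPaths n h, downSteps k p : ℕ) : ℤ) =
      binom n (u + max 1 (k - h)) - binom n (u + k + 1) := by
  induction n generalizing h u with
  | zero =>
    rw [binom_of_lt (by omega), binom_of_lt (by omega)]
    simp [downSteps]
  | succ n ih =>
    rcases hh.eq_or_lt with rfl | hh
    · rw [gdPaths_eq_empty_of_neg _ (by norm_num), sum_empty, Nat.cast_zero,
        show max 1 (k - -1) = k + 1 by omega, add_assoc, sub_self]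
    rw [sum_downSteps_gdPaths_succ k (by omega), Nat.cast_add, Nat.cast_add, Nat.cast_ite,
      Nat.cast_zero, Nat.cast_succ, ih (u := u - 1) (by omega) (by omega),
      ih (u := u) (by omega) (by omega), card_gdPaths n (u := u) (by omega) (by omega),
      binom_succ, binom_succ]
    rcases lt_trichotomy k (h + 1) with hkh | rfl | hkh
    · obtain ⟨e₁, e₂, e₃⟩ : max 1 (k - (h - 1)) = 1 ∧ max 1 (k - (h + 1)) = 1 ∧
          max 1 (k - h) = 1 := by omega
      rw [e₁, e₂, e₃, if_neg hkh.ne']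
      ring_nf
    · obtain ⟨e₁, e₂, e₃⟩ : max 1 (h + 1 - (h - 1)) = 2 ∧
          max 1 (h + 1 - (h + 1)) = 1 ∧ max 1 (h + 1 - h) = 1 := by omega
      rw [e₁, e₂, e₃, if_pos rfl]
      ring_nf
    · obtain ⟨e₁, e₂, e₃⟩ : max 1 (k - (h - 1)) = k - h + 1 ∧
          max 1 (k - (h + 1)) = k - h - 1 ∧ max 1 (k - h) = k - h := by omega
      rw [e₁, e₂, e₃, if_neg hkh.ne]
      ring_nf

theorem stmt5_general (n h k : ℕ) (hkh : k ≤ h) (hmod : n % 2 = h % 2) :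
    ((∑ p ∈ gdPaths n (h : ℤ), downSteps (k : ℤ) p : ℕ) : ℤ) =
      binom n (((n : ℤ) + h) / 2 + 1) - binom n (((n : ℤ) + h) / 2 + k + 1) := by
  rw [sum_downSteps_gdPaths n (by omega) (by omega) (by omega : 2 * (((n : ℤ) + h) / 2) = n + h),
    show max 1 ((k : ℤ) - h) = 1 by omega]

/-- For 1 ≤ k ≤ h, the total number of k-down steps over all generalized Dyck paths from
(0,0) to (n,h) equals C(n, (n+h)/2 + 1) − C(n, (n+h)/2 + k + 1). -/
theorem stmt5 (n h k : ℕ) (hk : 1 ≤ k) (hkh : k ≤ h) (hmod : n % 2 = h % 2) :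
    ((∑ p ∈ gdPaths n (h : ℤ), downSteps (k : ℤ) p : ℕ) : ℤ) =
      binom n (((n : ℤ) + h) / 2 + 1) - binom n (((n : ℤ) + h) / 2 + k + 1) :=
  stmt5_general n h k hkh hmod
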